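/- Let s ≥ 2 be an integer and p ≥ 2 an integer with gcd(p,s) = 1, and set ρ = 1/p. Let ν be the self-similar measure with equal weights for the IFS {τ_d(x) = (-1)^d ρ(x+d)}_{d=0}^{s-1}. Then any set Λ ⊂ ℝ such that {e^{2πiλx}}_{λ∈Λ} is orthogonal in L²(ν) has cardinality at most s; in particular ν is not a spectral measure. -/

import Mathlib

open MeasureTheory
open scoped ENNReal

/-- The Fourier transform of a measure on `ℝ`. -/
noncomputable def measureFT (μ : Measure ℝ) (t : ℝ) : ℂ :=
  ∫ x, Complex.exp (2 * (Real.pi : ℂ) * Complex.I * (t : ℂ) * (x : ℂ)) ∂μ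

/-- `Λ` is a spectrum of `μ`: the exponentials `{e^{2πiλx}}_{λ∈Λ}` are mutually orthogonal
in `L²(μ)` (each of norm one since `μ` is a probability measure) and total: any `f ∈ L²(μ)`
orthogonal to all of them vanishes `μ`-a.e.; i.e. they form an orthonormal basis of `L²(μ)`. -/
def IsSpectrum (μ : Measure ℝ) (Λ : Set ℝ) : Prop :=
  (∀ l1 ∈ Λ, ∀ l2 ∈ Λ, l1 ≠ l2 → measureFT μ (l1 - l2) = 0) ∧
    ∀ f : ℝ → ℂ, MemLp f 2 μ →
      (∀ l ∈ Λ, (∫ x, f x * (starRingEnd ℂ)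
          (Complex.exp (2 * (Real.pi : ℂ) * Complex.I * (l : ℂ) * (x : ℂ))) ∂μ) = 0) →
      f =ᵐ[μ] 0

/-- `μ` is a spectral measure. -/
def IsSpectral (μ : Measure ℝ) : Prop := ∃ Λ : Set ℝ, IsSpectrum μ Λ

/-!
Self-similarity gives `ν̂ t = s⁻¹ ∑_d e(±ρ d t) ν̂(±ρ t)`; splitting `d` by parity writes `ν̂ t`
as a combination of `ν̂ (ρ t)` and its conjugate whose coefficients are geometric sums of
`e(2ρt)`. Since `ν̂ (ρⁿ t) → 1`, a zero `t` of `ν̂` can be followed down to the last scale at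
which `ν̂` (for even `s = 2k`, a real twist of it) still vanishes, and there the geometric sums
force an arithmetic condition: for odd `s`, `2 s t` is an integer not divisible by `s`; for
`s = 2k`, either `2 k t` is an integer not divisible by `k`, or `2((2k-1)p - 1) t` is an odd
integer. The powers of `p` picked up on the way are harmless because `gcd(p, s) = 1`. A
pigeonhole argument modulo `s` (modulo `k` on each of at most two classes when `s = 2k`) then
bounds every orthogonal set by `s`. Finally, the support of `ν` contains the infinitely many
points `-ρⁿ⁺¹`, and indicators of disjoint neighbourhoods of more than `|Λ|` of them combine into
a nonzero `L²(ν)` function orthogonal to every exponential of a finite `Λ`.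
-/

open Finset Filter Real
open scoped Topology FourierTransform ComplexConjugate

lemma fourierChar_add (x y : ℝ) : (𝐞 (x + y) : ℂ) = 𝐞 x * 𝐞 y := by
  rw [AddChar.map_add_eq_mul, Circle.coe_mul]

lemma conj_fourierChar (x : ℝ) : conj (𝐞 x : ℂ) = 𝐞 (-x) := Circle.starRingEnd_addChar x

lemma fourierChar_pow (x : ℝ) (n : ℕ) : (𝐞 x : ℂ) ^ n = 𝐞 (n * x) := by
  rw [← Circle.coe_pow, ← AddChar.map_nsmul_eq_pow, nsmul_eq_mul]

lemma fourierChar_eq_one_iff {x : ℝ} : (𝐞 x : ℂ) = 1 ↔ ∃ n : ℤ, x = n := by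
  rw [Circle.coe_eq_one, Real.fourierChar_apply', Circle.exp_eq_one]
  refine exists_congr fun n => ⟨fun h => ?_, fun h => by rw [h]; ring⟩
  have : (2 * π) * (x - n) = 0 := by linarith
  simpa [sub_eq_zero, Real.pi_ne_zero] using this

lemma re_fourierChar (x : ℝ) : (𝐞 x : ℂ).re = Real.cos (2 * π * x) := by
  rw [Real.fourierChar_apply, Complex.exp_ofReal_mul_I_re]

lemma norm_fourierChar_sub_one_sq (x : ℝ) : ‖(𝐞 x : ℂ) - 1‖ ^ 2 = 2 - 2 * Real.cos (2 * π * x) := by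
  rw [Complex.sq_norm, Complex.normSq_sub, Complex.normSq_one, map_one, mul_one,
    Complex.normSq_eq_norm_sq, Circle.norm_coe, re_fourierChar]
  ring

lemma measureFT_eq_charFun (μ : Measure ℝ) (t : ℝ) : measureFT μ t = charFun μ (2 * π * t) := by
  rw [measureFT, charFun_apply_real]
  congr 1 with x
  push_cast; ring_nf

lemma measureFT_zero (μ : Measure ℝ) [IsProbabilityMeasure μ] : measureFT μ 0 = 1 := by
  simp [measureFT_eq_charFun]

lemma continuous_measureFT (μ : Measure ℝ) [IsFiniteMeasure μ] : Continuous (measureFT μ) := by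
  simp_rw [funext (measureFT_eq_charFun μ)]
  fun_prop

lemma measureFT_neg (μ : Measure ℝ) (t : ℝ) : measureFT μ (-t) = conj (measureFT μ t) := by
  rw [measureFT_eq_charFun, measureFT_eq_charFun, ← charFun_neg, mul_neg]

lemma measureFT_smul (c : ℝ≥0∞) (μ : Measure ℝ) (t : ℝ) :
    measureFT (c • μ) t = c.toReal * measureFT μ t := by
  rw [measureFT, measureFT, integral_smul_measure, Complex.real_smul]

lemma measureFT_finset_sum {ι : Type*} (S : Finset ι) (μ : ι → Measure ℝ)
    [∀ i, IsFiniteMeasure (μ i)] (t : ℝ) :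
    measureFT (∑ i ∈ S, μ i) t = ∑ i ∈ S, measureFT (μ i) t := by
  simp_rw [measureFT_eq_charFun, charFun_eq_integral_innerProbChar]
  exact integral_finsetSum_measure fun i _ =>
    (BoundedContinuousFunction.innerProbChar _).integrable _

lemma measureFT_map_affine (μ : Measure ℝ) (a b t : ℝ) :
    measureFT (μ.map fun x => a * (x + b)) t = 𝐞 (a * b * t) * measureFT μ (a * t) := by
  rw [measureFT_eq_charFun, charFun_map_mul_comp (by fun_prop), charFun_map_add_const,
    measureFT_eq_charFun, Real.fourierChar_apply, Real.inner_apply, mul_comm]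
  congr 2 <;> push_cast <;> ring

noncomputable def expSum (n : ℕ) (x : ℝ) : ℂ := ∑ j ∈ range n, (𝐞 (j * x) : ℂ)

lemma expSum_eq_geom_sum (n : ℕ) (x : ℝ) : expSum n x = ∑ j ∈ range n, (𝐞 x : ℂ) ^ j := by
  simp only [expSum, fourierChar_pow]

lemma conj_expSum (n : ℕ) (x : ℝ) : conj (expSum n x) = 𝐞 (-((n - 1) * x)) * expSum n x := by
  rw [expSum, map_sum, mul_sum, ← sum_range_reflect]
  refine sum_congr rfl fun j hj => ?_
  have hj : ((n - 1 - j : ℕ) : ℝ) = n - 1 - j := by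
    rw [Nat.sub_sub, Nat.cast_sub (by simp at hj; omega)]
    push_cast; ring
  rw [conj_fourierChar, ← fourierChar_add, hj]
  congr 2
  ring

lemma not_dvd_of_fourierChar_ne_one {n : ℕ} (hn : n ≠ 0) {x : ℝ} {c : ℤ}
    (hx : (𝐞 x : ℂ) ≠ 1) (hc : n * x = c) : ¬ (n : ℤ) ∣ c := by
  rintro ⟨w, rfl⟩
  refine hx (fourierChar_eq_one_iff.mpr ⟨w, ?_⟩)
  have hn' : (n : ℝ) ≠ 0 := by exact_mod_cast hn
  apply mul_left_cancel₀ hn'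
  rw [hc]; push_cast; ring

lemma exists_int_of_expSum_eq_zero {n : ℕ} (hn : n ≠ 0) {x : ℝ} (h : expSum n x = 0) :
    ∃ c : ℤ, n * x = c ∧ ¬ (n : ℤ) ∣ c := by
  rw [expSum_eq_geom_sum] at h
  have hx : (𝐞 x : ℂ) ≠ 1 := by
    intro hx
    simp [hx, hn] at h
  have hpow : (𝐞 (n * x) : ℂ) = 1 := by
    rw [← fourierChar_pow, ← sub_eq_zero, ← geom_sum_mul, h, zero_mul]
  obtain ⟨c, hc⟩ := fourierChar_eq_one_iff.mp hpow
  exact ⟨c, hc, not_dvd_of_fourierChar_ne_one hn hx hc⟩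

lemma exists_int_of_norm_expSum_succ_eq {k : ℕ} {x : ℝ}
    (h : ‖expSum (k + 1) x‖ = ‖expSum k x‖) :
    ∃ c : ℤ, ((2 * k + 1 : ℕ) : ℝ) * x = c ∧ ¬ ((2 * k + 1 : ℕ) : ℤ) ∣ c := by
  rw [expSum_eq_geom_sum, expSum_eq_geom_sum] at h
  have hx : (𝐞 x : ℂ) ≠ 1 := by
    intro hx
    simp only [hx, one_pow, sum_const, card_range, nsmul_eq_mul, mul_one, Complex.norm_natCast] at h
    push_cast at h
    linarith
  have hnorm : ‖(𝐞 ((k + 1 : ℕ) * x) : ℂ) - 1‖ = ‖(𝐞 (k * x) : ℂ) - 1‖ := by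
    rw [← fourierChar_pow, ← fourierChar_pow, ← geom_sum_mul, ← geom_sum_mul, norm_mul, norm_mul, h]
  have hcos : Real.cos (2 * π * ((k + 1 : ℕ) * x)) = Real.cos (2 * π * (k * x)) := by
    have := congrArg (· ^ 2) hnorm
    simp only [norm_fourierChar_sub_one_sq] at this
    linarith
  obtain ⟨c, hc | hc⟩ := Real.cos_eq_cos_iff.mp hcos
  · refine absurd (fourierChar_eq_one_iff.mpr ⟨-c, ?_⟩) hx
    apply mul_left_cancel₀ Real.two_pi_pos.ne'
    push_cast at hc ⊢
    linarith
  · have hc' : ((2 * k + 1 : ℕ) : ℝ) * x = c := by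
      apply mul_left_cancel₀ Real.two_pi_pos.ne'
      push_cast at hc ⊢
      linarith
    exact ⟨c, hc', not_dvd_of_fourierChar_ne_one (by omega) hx hc'⟩

noncomputable def centredExpSum (k : ℕ) (u : ℝ) : ℝ := (𝐞 (-((k - 1) * u)) * expSum k (2 * u)).re

lemma ofReal_centredExpSum (k : ℕ) (u : ℝ) :
    (centredExpSum k u : ℂ) = 𝐞 (-((k - 1) * u)) * expSum k (2 * u) := by
  rw [centredExpSum, ← Complex.conj_eq_iff_re, map_mul (starRingEnd ℂ), conj_expSum,
    conj_fourierChar, ← mul_assoc, ← fourierChar_add]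
  congr 3
  ring

lemma sum_range_even_add_odd {M : Type*} [AddCommMonoid M] (f : ℕ → M) (n : ℕ) :
    ∑ d ∈ range n, f d =
      ∑ j ∈ range ((n + 1) / 2), f (2 * j) + ∑ j ∈ range (n / 2), f (2 * j + 1) := by
  induction n with
  | zero => simp
  | succ n ih =>
    rw [sum_range_succ, ih]
    obtain ⟨m, rfl | rfl⟩ := Nat.even_or_odd' n
    · rw [show (2 * m + 1 + 1) / 2 = m + 1 by omega, show (2 * m + 1) / 2 = m by omega,
        show 2 * m / 2 = m by omega, sum_range_succ]
      abel
    · rw [show (2 * m + 1 + 1 + 1) / 2 = m + 1 by omega, show (2 * m + 1 + 1) / 2 = m + 1 by omega,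
        show (2 * m + 1) / 2 = m by omega, sum_range_succ (fun j => f (2 * j + 1))]
      abel

lemma exists_eq_zero_and_ne_zero_of_pow_mul {E : Type*} [TopologicalSpace E] [T1Space E] [Zero E]
    {f : ℝ → E} (hf : ContinuousAt f 0) (hf0 : f 0 ≠ 0) {ρ : ℝ} (hρ : |ρ| < 1) {t : ℝ}
    (ht : f t = 0) : ∃ j : ℕ, f (ρ ^ j * t) = 0 ∧ f (ρ ^ (j + 1) * t) ≠ 0 := by
  have hlim : Tendsto (fun n : ℕ => f (ρ ^ n * t)) atTop (𝓝 (f 0)) := by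
    refine hf.tendsto.comp ?_
    simpa using (tendsto_pow_atTop_nhds_zero_of_abs_lt_one hρ).mul_const t
  obtain ⟨j, hj, hj1⟩ := Nat.exists_not_and_succ_of_not_zero_of_exists
    (p := fun n => f (ρ ^ n * t) ≠ 0) (by simpa using ht) (hlim.eventually_ne hf0).exists
  exact ⟨j, not_not.mp hj, hj1⟩

lemma not_dvd_pow_mul {n p : ℕ} (h : Nat.Coprime n p) {c : ℤ} (hc : ¬ (n : ℤ) ∣ c) (m : ℕ) :
    ¬ (n : ℤ) ∣ p ^ m * c :=
  fun hdvd => hc ((Nat.isCoprime_iff_coprime.mpr (h.pow_right m)).dvd_of_dvd_mul_left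
    (by rwa [Nat.cast_pow]))

lemma mul_eq_pow_mul_of_mul_inv_pow {p : ℕ} (hp : p ≠ 0) {a t c : ℝ} (m : ℕ)
    (h : a * ((1 / p) ^ m * t) = c) : a * t = p ^ m * c := by
  rw [← h, one_div, inv_pow]
  field_simp

lemma abs_one_div_natCast_lt_one {p : ℕ} (hp : 1 < p) : |(1 / p : ℝ)| < 1 := by
  rw [abs_of_pos (by positivity), div_lt_one (by positivity)]
  exact_mod_cast hp

lemma finite_ncard_le_of_forall_int_not_dvd {n : ℕ} [NeZero n] {a : ℝ} {Λ : Set ℝ}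
    (H : ∀ x ∈ Λ, ∀ y ∈ Λ, x ≠ y → ∃ c : ℤ, a * (x - y) = c ∧ ¬ (n : ℤ) ∣ c) :
    Λ.Finite ∧ Λ.ncard ≤ n := by
  rcases Λ.eq_empty_or_nonempty with rfl | ⟨x₀, hx₀⟩
  · simp
  have hint : ∀ x ∈ Λ, a * (x - x₀) = ⌊a * (x - x₀)⌋ := by
    intro x hx
    rcases eq_or_ne x x₀ with rfl | hne
    · simp
    obtain ⟨c, hc, -⟩ := H x hx x₀ hx₀ hne
    rw [hc, Int.floor_intCast]
  have hinj : Set.InjOn (fun x => (⌊a * (x - x₀)⌋ : ZMod n)) Λ := by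
    intro x hx y hy hxy
    by_contra hne
    obtain ⟨c, hc, hndvd⟩ := H x hx y hy hne
    have hc' : c = ⌊a * (x - x₀)⌋ - ⌊a * (y - x₀)⌋ := by
      have : (c : ℝ) = ⌊a * (x - x₀)⌋ - ⌊a * (y - x₀)⌋ := by
        rw [← hc, ← hint x hx, ← hint y hy]
        ring
      exact_mod_cast this
    exact hndvd (hc' ▸ (ZMod.intCast_eq_intCast_iff_dvd_sub _ _ n).mp hxy.symm)
  refine ⟨Set.Finite.of_injOn (Set.mapsTo_univ _ _) hinj Set.finite_univ, ?_⟩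
  calc Λ.ncard ≤ (Set.univ : Set (ZMod n)).ncard :=
        Set.ncard_le_ncard_of_injOn _ (fun _ _ => Set.mem_univ _) hinj
    _ = n := by simp

lemma not_dvd_of_mul_eq_odd {k : ℕ} (hk : k ≠ 0) {b : ℤ} (hb : 4 ∣ b) {t : ℝ} {c d : ℤ}
    (hc : 2 * (k : ℝ) * t = c) (hd : b * t = d) (hodd : Odd d) : ¬ (k : ℤ) ∣ c := by
  rintro ⟨w, rfl⟩
  obtain ⟨r, rfl⟩ := hb
  have h2 : 2 * t = w := by
    apply mul_left_cancel₀ (Nat.cast_ne_zero.mpr hk : (k : ℝ) ≠ 0)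
    push_cast at hc
    linear_combination hc
  have : d = 2 * (r * w) := by
    have : (d : ℝ) = 2 * (r * w) := by rw [← hd, ← h2]; push_cast; ring
    exact_mod_cast this
  exact Int.not_even_iff_odd.mpr hodd ⟨r * w, by omega⟩

/-- Points at `2k`-integral distance form classes; within a class the odd alternative is excluded
by `not_dvd_of_mul_eq_odd`, and there are at most two classes because an odd integer is not the
sum of two odd ones. -/
lemma finite_ncard_le_two_mul {k : ℕ} [NeZero k] {b : ℤ} (hb : 4 ∣ b) {Λ : Set ℝ}
    (H : ∀ x ∈ Λ, ∀ y ∈ Λ, x ≠ y →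
      (∃ c : ℤ, 2 * (k : ℝ) * (x - y) = c ∧ ¬ (k : ℤ) ∣ c) ∨ ∃ c : ℤ, b * (x - y) = c ∧ Odd c) :
    Λ.Finite ∧ Λ.ncard ≤ 2 * k := by
  set C : ℝ → Set ℝ := fun z => {x ∈ Λ | ∃ c : ℤ, 2 * (k : ℝ) * (x - z) = c}
  have hodd : ∀ x ∈ Λ, ∀ y ∈ Λ, x ∉ C y → ∃ c : ℤ, b * (x - y) = c ∧ Odd c := by
    intro x hx y hy hxy
    have hne : x ≠ y := by
      rintro rfl
      exact hxy ⟨hx, 0, by simp⟩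
    exact (H x hx y hy hne).resolve_left fun ⟨c, hc, _⟩ => hxy ⟨hx, c, hc⟩
  have hclass : ∀ z, (C z).Finite ∧ (C z).ncard ≤ k := fun z =>
    finite_ncard_le_of_forall_int_not_dvd fun x hx y hy hne => by
      refine (H x hx.1 y hy.1 hne).elim id fun ⟨d, hd, hd_odd⟩ => ?_
      obtain ⟨cx, hcx⟩ := hx.2
      obtain ⟨cy, hcy⟩ := hy.2
      have hc : 2 * (k : ℝ) * (x - y) = (cx - cy : ℤ) := by push_cast; rw [← hcx, ← hcy]; ring
      exact ⟨cx - cy, hc, not_dvd_of_mul_eq_odd (NeZero.ne k) hb hc hd hd_odd⟩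
  obtain ⟨x₀, x₁, hcover⟩ : ∃ x₀ x₁, Λ ⊆ C x₀ ∪ C x₁ := by
    rcases Λ.eq_empty_or_nonempty with rfl | ⟨x₀, hx₀⟩
    · exact ⟨0, 0, Set.empty_subset _⟩
    by_cases h : ∃ x₁ ∈ Λ, x₁ ∉ C x₀
    · obtain ⟨x₁, hx₁, hx₁C⟩ := h
      refine ⟨x₀, x₁, fun x hx => ?_⟩
      by_contra hxC
      simp only [Set.mem_union, not_or] at hxC
      obtain ⟨c₁, hc₁, hodd₁⟩ := hodd x hx x₁ hx₁ hxC.2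
      obtain ⟨c₂, hc₂, hodd₂⟩ := hodd x₁ hx₁ x₀ hx₀ hx₁C
      obtain ⟨c₃, hc₃, hodd₃⟩ := hodd x hx x₀ hx₀ hxC.1
      have : c₃ = c₁ + c₂ := by
        have : (c₃ : ℝ) = c₁ + c₂ := by rw [← hc₁, ← hc₂, ← hc₃]; ring
        exact_mod_cast this
      exact Int.not_even_iff_odd.mpr hodd₃ (this ▸ hodd₁.add_odd hodd₂)
    · push Not at h
      exact ⟨x₀, x₀, fun x hx => Or.inl (h x hx)⟩
  have hfin := (hclass x₀).1.union (hclass x₁).1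
  refine ⟨hfin.subset hcover, ?_⟩
  calc Λ.ncard ≤ (C x₀ ∪ C x₁).ncard := Set.ncard_le_ncard hcover hfin
    _ ≤ (C x₀).ncard + (C x₁).ncard := Set.ncard_union_le _ _
    _ ≤ 2 * k := by linarith [(hclass x₀).2, (hclass x₁).2]

lemma integral_sum_indicator_const_mul {μ : Measure ℝ} {ι : Type*} (S : Finset ι) {U : ι → Set ℝ}
    (hU : ∀ i, MeasurableSet (U i)) (g : ι → ℂ) {φ : ℝ → ℂ} (hφ : Integrable φ μ) :
    ∫ y, (∑ i ∈ S, (U i).indicator (fun _ => g i) y) * φ y ∂μ =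
      ∑ i ∈ S, g i * ∫ y in U i, φ y ∂μ := by
  have hind : ∀ i y,
      (U i).indicator (fun _ => g i) y * φ y = (U i).indicator (fun y => g i * φ y) y :=
    fun i y => by simp only [Set.indicator_mul_left]
  simp_rw [sum_mul, hind]
  rw [integral_finsetSum _ fun i _ => (hφ.const_mul (g i)).indicator (hU i)]
  simp_rw [integral_indicator (hU _), integral_const_mul]

lemma IsSpectrum.card_le_of_subset_support {μ : Measure ℝ} [IsFiniteMeasure μ] {Λ : Set ℝ}
    (hΛ : IsSpectrum μ Λ) (hfin : Λ.Finite) {S : Finset ℝ} (hS : (S : Set ℝ) ⊆ μ.support) :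
    S.card ≤ Λ.ncard := by
  by_contra! hlt
  obtain ⟨U, hU, hdisj⟩ := S.finite_toSet.t2_separation
  set χ : ℝ → ℝ → ℂ := fun l y =>
    conj (Complex.exp (2 * (Real.pi : ℂ) * Complex.I * (l : ℂ) * (y : ℂ)))
  have hχ : ∀ l, Integrable (χ l) μ := fun l => by
    refine (integrable_const (1 : ℝ)).mono' (by fun_prop) (ae_of_all _ fun y => ?_)
    simp [χ, Complex.norm_exp]
  obtain ⟨g, hg, i, hi⟩ := Fintype.not_linearIndependent_iff.mp fun hli :
      LinearIndependent ℂ (fun (x : S) (l : hfin.toFinset) => ∫ y in U x, χ l y ∂μ) => by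
    have := hli.fintype_card_le_finrank
    rw [Module.finrank_fintype_fun_eq_card, Fintype.card_coe, Fintype.card_coe,
      ← Set.ncard_eq_toFinset_card Λ hfin] at this
    omega
  set f : ℝ → ℂ := fun y => ∑ x : S, (U x).indicator (fun _ => g x) y
  have hf : MemLp f 2 μ := memLp_finsetSum _ fun x _ =>
    memLp_indicator_const 2 (hU x).2.measurableSet (g x) (Or.inr (measure_ne_top μ _))
  have horth : ∀ l ∈ Λ, ∫ y, f y * χ l y ∂μ = 0 := fun l hl => by
    rw [integral_sum_indicator_const_mul (U := fun x : S => U x) _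
      (fun x => (hU x).2.measurableSet) g (hχ l)]
    simpa using congrFun hg ⟨l, hfin.mem_toFinset.mpr hl⟩
  have hfi : ∀ y ∈ U i, f y = g i := fun y hy => by
    simp only [f]
    rw [Fintype.sum_eq_single i fun x hx => Set.indicator_of_notMem
      (fun hyx => Set.disjoint_left.mp (hdisj x.2 i.2 (Subtype.coe_ne_coe.mpr hx)) hyx hy) _]
    exact Set.indicator_of_mem hy _
  have hpos : 0 < μ (U i) :=
    (Measure.mem_support_iff_forall _).mp (hS i.2) _ ((hU i).2.mem_nhds (hU i).1)
  refine hpos.ne' (measure_mono_null (fun y hy => ?_) (ae_iff.mp (hΛ.2 f hf horth)))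
  simpa [hfi y hy] using hi

def ifsMap (ρ : ℝ) (d : ℕ) (x : ℝ) : ℝ := (-1) ^ d * ρ * (x + d)

def IsSelfSimilar (s : ℕ) (ρ : ℝ) (ν : Measure ℝ) : Prop :=
  ν = (s : ℝ≥0∞)⁻¹ • ∑ d ∈ range s, ν.map (ifsMap ρ d)

lemma continuous_ifsMap (ρ : ℝ) (d : ℕ) : Continuous (ifsMap ρ d) := by
  unfold ifsMap
  fun_prop

/-- For `s = 2k` the self-similarity identity of `ν̂` factors through this real function
(`IsSelfSimilar.measureFT_eq_even`), and it is its zeros that propagate along `t ↦ ρ t`. -/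
noncomputable def twistedFT (k : ℕ) (μ : Measure ℝ) (v : ℝ) : ℝ :=
  (𝐞 ((2 * k - 1) / 2 * v) * measureFT μ v).re

lemma continuous_twistedFT (k : ℕ) (μ : Measure ℝ) [IsFiniteMeasure μ] :
    Continuous (twistedFT k μ) := by
  unfold twistedFT
  have := continuous_measureFT μ
  fun_prop

lemma twistedFT_zero (k : ℕ) (μ : Measure ℝ) [IsProbabilityMeasure μ] : twistedFT k μ 0 = 1 := by
  simp [twistedFT, measureFT_zero]

section SelfSimilar

variable {s : ℕ} {ρ : ℝ} {ν : Measure ℝ}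

section FourierTransform

variable [IsFiniteMeasure ν]

lemma IsSelfSimilar.measureFT_eq (hν : IsSelfSimilar s ρ ν) (t : ℝ) :
    measureFT ν t =
      (s : ℂ)⁻¹ * ∑ d ∈ range s, 𝐞 ((-1) ^ d * ρ * d * t) * measureFT ν ((-1) ^ d * ρ * t) := by
  have : ∀ d, IsFiniteMeasure (ν.map (ifsMap ρ d)) := fun d => Measure.isFiniteMeasure_map _ _
  conv_lhs => rw [hν]
  rw [measureFT_smul, measureFT_finset_sum, ENNReal.toReal_inv, ENNReal.toReal_natCast]
  push_cast
  congr 1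
  exact sum_congr rfl fun d _ => measureFT_map_affine ν _ _ t

lemma IsSelfSimilar.measureFT_eq_parity (hν : IsSelfSimilar s ρ ν) (t : ℝ) :
    measureFT ν t = (s : ℂ)⁻¹ * (expSum ((s + 1) / 2) (2 * (ρ * t)) * measureFT ν (ρ * t) +
      𝐞 (-(ρ * t)) * conj (expSum (s / 2) (2 * (ρ * t)) * measureFT ν (ρ * t))) := by
  rw [hν.measureFT_eq, sum_range_even_add_odd, expSum, expSum, sum_mul, sum_mul, map_sum, mul_sum]
  congr 2 <;> refine sum_congr rfl fun j _ => ?_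
  · simp only [pow_mul, neg_one_sq, one_pow, one_mul]
    rw [show ρ * ((2 * j : ℕ) : ℝ) * t = j * (2 * (ρ * t)) by push_cast; ring]
  · rw [pow_succ, pow_mul, neg_one_sq, one_pow, one_mul]
    rw [map_mul (starRingEnd ℂ), conj_fourierChar, ← measureFT_neg, ← mul_assoc, ← fourierChar_add]
    congr 3 <;> push_cast <;> ring

lemma IsSelfSimilar.norm_expSum_succ_eq {k : ℕ}
    (hν : IsSelfSimilar (2 * k + 1) ρ ν) {v : ℝ} (hv : measureFT ν v = 0)
    (hρv : measureFT ν (ρ * v) ≠ 0) :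
    ‖expSum (k + 1) (2 * (ρ * v))‖ = ‖expSum k (2 * (ρ * v))‖ := by
  rw [hν.measureFT_eq_parity, show (2 * k + 1 + 1) / 2 = k + 1 by omega,
    show (2 * k + 1) / 2 = k by omega] at hv
  have hsum := (mul_eq_zero.mp hv).resolve_left (inv_ne_zero (Nat.cast_ne_zero.mpr (by omega)))
  have := congrArg norm (eq_neg_of_add_eq_zero_left hsum)
  rw [norm_neg, norm_mul, norm_mul, Circle.norm_coe, one_mul, Complex.norm_conj, norm_mul] at this
  exact mul_right_cancel₀ (norm_ne_zero_iff.mpr hρv) this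

lemma IsSelfSimilar.measureFT_eq_even {k : ℕ} (hν : IsSelfSimilar (2 * k) ρ ν) (t : ℝ) :
    measureFT ν t =
      (k : ℂ)⁻¹ * centredExpSum k (ρ * t) * twistedFT k ν (ρ * t) * 𝐞 (-(ρ * t / 2)) := by
  rw [hν.measureFT_eq_parity, show (2 * k + 1) / 2 = k by omega, show 2 * k / 2 = k by omega,
    ofReal_centredExpSum, twistedFT]
  set u := ρ * t
  have e1 : (𝐞 (-((k - 1) * u)) : ℂ) * 𝐞 ((2 * k - 1) / 2 * u) * 𝐞 (-(u / 2)) = 1 := by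
    rw [← fourierChar_add, ← fourierChar_add, fourierChar_eq_one_iff]
    exact ⟨0, by push_cast; ring⟩
  have e2 : (𝐞 (-((k - 1) * u)) : ℂ) * 𝐞 (-((2 * k - 1) / 2 * u)) * 𝐞 (-(u / 2)) =
      𝐞 (-u) * 𝐞 (-((k - 1) * (2 * u))) := by
    simp only [← fourierChar_add]
    congr 2; ring
  rw [Complex.re_eq_add_conj, map_mul (starRingEnd ℂ), map_mul (starRingEnd ℂ), conj_expSum,
    conj_fourierChar]
  push_cast
  linear_combination (-(k : ℂ)⁻¹ / 2 * expSum k (2 * u) * measureFT ν u) * e1 -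
    ((k : ℂ)⁻¹ / 2 * expSum k (2 * u) * conj (measureFT ν u)) * e2

lemma IsSelfSimilar.twistedFT_eq_even {k : ℕ} (hν : IsSelfSimilar (2 * k) ρ ν) (t : ℝ) :
    twistedFT k ν t = (k : ℝ)⁻¹ * centredExpSum k (ρ * t) * twistedFT k ν (ρ * t) *
      Real.cos (2 * π * ((2 * k - 1) / 2 * t - ρ * t / 2)) := by
  rw [twistedFT, hν.measureFT_eq_even t, ← re_fourierChar, ← Complex.re_ofReal_mul]
  congr 1
  rw [sub_eq_add_neg ((2 * k - 1) / 2 * t), fourierChar_add]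
  push_cast
  ring

end FourierTransform

lemma IsSelfSimilar.ifsMap_mem_support (hν : IsSelfSimilar s ρ ν) {d : ℕ} (hd : d < s) {x : ℝ}
    (hx : x ∈ ν.support) : ifsMap ρ d x ∈ ν.support := by
  rw [Measure.mem_support_iff_forall] at hx ⊢
  intro U hU
  have hpre := hx _ ((continuous_ifsMap ρ d).continuousAt.preimage_mem_nhds hU)
  calc 0 < (s : ℝ≥0∞)⁻¹ * ν (ifsMap ρ d ⁻¹' U) :=
        ENNReal.mul_pos (ENNReal.inv_ne_zero.mpr (ENNReal.natCast_ne_top s)) hpre.ne'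
    _ ≤ (s : ℝ≥0∞)⁻¹ * ∑ d' ∈ range s, ν.map (ifsMap ρ d') U := by
        gcongr
        exact (Measure.le_map_apply (continuous_ifsMap ρ d).aemeasurable U).trans
          (single_le_sum (f := fun d' => ν.map (ifsMap ρ d') U) (fun _ _ => zero_le)
            (mem_range.mpr hd))
    _ = ν U := by
        conv_rhs => rw [hν]
        rw [Measure.smul_apply, Measure.coe_finsetSum, Finset.sum_apply, smul_eq_mul]

lemma IsSelfSimilar.pow_mul_mem_support (hν : IsSelfSimilar s ρ ν) (hs : s ≠ 0) {y : ℝ}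
    (hy : y ∈ ν.support) (n : ℕ) : ρ ^ n * y ∈ ν.support := by
  induction n with
  | zero => simpa using hy
  | succ n ih =>
    have := hν.ifsMap_mem_support (Nat.pos_of_ne_zero hs) ih
    rwa [ifsMap, pow_zero, one_mul, Nat.cast_zero, add_zero, ← mul_assoc, ← pow_succ'] at this

variable [IsProbabilityMeasure ν]

lemma IsSelfSimilar.exists_centredExpSum_eq_zero_or_cos_eq_zero {k : ℕ} (hk : k ≠ 0)
    (hν : IsSelfSimilar (2 * k) ρ ν) (hρ : |ρ| < 1) {t : ℝ} (ht : measureFT ν t = 0) :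
    ∃ m : ℕ, centredExpSum k (ρ * (ρ ^ m * t)) = 0 ∨
      Real.cos (2 * π * ((2 * k - 1) / 2 * (ρ ^ m * t) - ρ * (ρ ^ m * t) / 2)) = 0 := by
  have hsplit : centredExpSum k (ρ * t) = 0 ∨ twistedFT k ν (ρ * t) = 0 := by
    rw [hν.measureFT_eq_even] at ht
    simpa [hk, Circle.coe_ne_zero, or_assoc] using ht
  rcases hsplit with hW | hT
  · exact ⟨0, Or.inl (by simpa using hW)⟩
  obtain ⟨j, hj, hj1⟩ := exists_eq_zero_and_ne_zero_of_pow_mul (f := fun v => twistedFT k ν (ρ * v))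
    ((continuous_twistedFT k ν).comp (continuous_const_mul ρ)).continuousAt
    (by simp [twistedFT_zero]) hρ hT
  refine ⟨j + 1, ?_⟩
  rw [pow_succ', mul_assoc] at hj1 ⊢
  rw [hν.twistedFT_eq_even] at hj
  simpa [hk, hj1] using hj

lemma IsSelfSimilar.zero_mem_support (hν : IsSelfSimilar s ρ ν) (hs : s ≠ 0) (hρ : |ρ| < 1) :
    0 ∈ ν.support := by
  obtain ⟨x, hx⟩ := Measure.nonempty_support (IsProbabilityMeasure.ne_zero ν)
  refine Measure.isClosed_support.mem_of_tendsto (f := fun n : ℕ => ρ ^ n * x) (b := atTop) ?_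
    (Eventually.of_forall (hν.pow_mul_mem_support hs hx))
  simpa using (tendsto_pow_atTop_nhds_zero_of_abs_lt_one hρ).mul_const x

lemma IsSelfSimilar.support_infinite (hν : IsSelfSimilar s ρ ν) (hs : 2 ≤ s) (hρ₀ : 0 < ρ)
    (hρ : |ρ| < 1) : ν.support.Infinite := by
  refine Set.infinite_of_injective_forall_mem (f := fun n : ℕ => ρ ^ n * -ρ) ?_
    (hν.pow_mul_mem_support (by omega) ?_)
  · exact fun m n h => pow_right_injective₀ hρ₀ (abs_lt.mp hρ).2.ne
      (mul_right_cancel₀ (neg_ne_zero.mpr hρ₀.ne') h)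
  · have := hν.ifsMap_mem_support (d := 1) (by omega) (hν.zero_mem_support (by omega) hρ)
    simpa [ifsMap] using this

variable {p : ℕ}

lemma IsSelfSimilar.exists_int_of_measureFT_eq_zero_odd {k : ℕ}
    (hν : IsSelfSimilar (2 * k + 1) (1 / p) ν) (hp : 1 < p) (hcop : Nat.Coprime (2 * k + 1) p)
    {t : ℝ} (ht : measureFT ν t = 0) :
    ∃ c : ℤ, 2 * ((2 * k + 1 : ℕ) : ℝ) * t = c ∧ ¬ ((2 * k + 1 : ℕ) : ℤ) ∣ c := by
  obtain ⟨j, hj, hj1⟩ := exists_eq_zero_and_ne_zero_of_pow_mul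
    (continuous_measureFT ν).continuousAt (by simp [measureFT_zero])
    (abs_one_div_natCast_lt_one hp) ht
  rw [pow_succ', mul_assoc] at hj1
  obtain ⟨c, hc, hndvd⟩ := exists_int_of_norm_expSum_succ_eq (hν.norm_expSum_succ_eq hj hj1)
  refine ⟨p ^ (j + 1) * c, ?_, not_dvd_pow_mul hcop hndvd _⟩
  push_cast at hc ⊢
  refine mul_eq_pow_mul_of_mul_inv_pow (by omega) (j + 1) ?_
  rw [← hc, pow_succ']
  ring

lemma IsSelfSimilar.exists_int_of_measureFT_eq_zero_even {k : ℕ} (hk : k ≠ 0)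
    (hν : IsSelfSimilar (2 * k) (1 / p) ν) (hp : 1 < p) (hcop : Nat.Coprime (2 * k) p)
    {t : ℝ} (ht : measureFT ν t = 0) :
    (∃ c : ℤ, 2 * (k : ℝ) * t = c ∧ ¬ (k : ℤ) ∣ c) ∨
      ∃ c : ℤ, ((2 * ((2 * k - 1) * p - 1) : ℤ) : ℝ) * t = c ∧ Odd c := by
  obtain ⟨m, hW | hcos⟩ :=
    hν.exists_centredExpSum_eq_zero_or_cos_eq_zero hk (abs_one_div_natCast_lt_one hp) ht
  · left
    rw [← Complex.ofReal_eq_zero, ofReal_centredExpSum, mul_eq_zero] at hW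
    obtain ⟨c, hc, hndvd⟩ :=
      exists_int_of_expSum_eq_zero hk (hW.resolve_left (Circle.coe_ne_zero _))
    refine ⟨p ^ (m + 1) * c, ?_, not_dvd_pow_mul (Nat.Coprime.coprime_mul_left hcop) hndvd _⟩
    push_cast
    refine mul_eq_pow_mul_of_mul_inv_pow (by omega) (m + 1) ?_
    rw [← hc, pow_succ']
    ring
  · right
    obtain ⟨b, hb⟩ := Real.cos_eq_zero_iff.mp hcos
    refine ⟨p ^ (m + 1) * (2 * b + 1), ?_, ?_⟩
    · have hv : 2 * ((2 * k - 1) * ((1 / p) ^ m * t) - 1 / p * ((1 / p) ^ m * t)) = 2 * b + 1 := by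
        apply mul_left_cancel₀ Real.pi_ne_zero
        linear_combination 2 * hb
      push_cast
      refine mul_eq_pow_mul_of_mul_inv_pow (by omega) (m + 1) ?_
      rw [← hv, pow_succ']
      field_simp
    · exact (((Nat.Coprime.odd_of_left (Nat.Coprime.coprime_mul_right hcop)).natCast
        (R := ℤ)).pow).mul (odd_two_mul_add_one b)

lemma IsSelfSimilar.finite_ncard_le_of_orthogonal (hν : IsSelfSimilar s (1 / p) ν) (hs : 2 ≤ s)
    (hp : 1 < p) (hcop : Nat.Coprime p s) {Λ : Set ℝ}
    (horth : ∀ l1 ∈ Λ, ∀ l2 ∈ Λ, l1 ≠ l2 → measureFT ν (l1 - l2) = 0) :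
    Λ.Finite ∧ Λ.ncard ≤ s := by
  obtain ⟨k, rfl | rfl⟩ := Nat.even_or_odd' s
  · have : NeZero k := ⟨by omega⟩
    obtain ⟨l, rfl⟩ := Nat.Coprime.odd_of_left (Nat.Coprime.coprime_mul_right hcop.symm)
    exact finite_ncard_le_two_mul ⟨2 * k * l + k - l - 1, by push_cast; ring⟩
      fun x hx y hy hxy => hν.exists_int_of_measureFT_eq_zero_even (NeZero.ne k) hp hcop.symm
        (horth x hx y hy hxy)
  · exact finite_ncard_le_of_forall_int_not_dvd
      fun x hx y hy hxy => hν.exists_int_of_measureFT_eq_zero_odd hp hcop.symm (horth x hx y hy hxy)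

lemma IsSelfSimilar.not_isSpectral (hν : IsSelfSimilar s (1 / p) ν) (hs : 2 ≤ s) (hp : 1 < p)
    (hcop : Nat.Coprime p s) : ¬ IsSpectral ν := by
  rintro ⟨Λ, hΛ⟩
  obtain ⟨S, hS, hcard⟩ := (hν.support_infinite hs (by positivity)
    (abs_one_div_natCast_lt_one hp)).exists_subset_card_eq (Λ.ncard + 1)
  have := hΛ.card_le_of_subset_support (hν.finite_ncard_le_of_orthogonal hs hp hcop hΛ.1).1 hS
  omega

end SelfSimilar

/-- for integers `s ≥ 2`, `p ≥ 2` with `gcd(p,s)=1`, `ρ = 1/p`, and the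
self-similar measure `ν` of the IFS `{τ_d(x)=(-1)^d ρ(x+d)}_{d=0}^{s-1}` with equal weights:
any orthogonal set of exponentials for `ν` has at most `s` elements, and `ν` is not a
spectral measure. -/
theorem nonspectral_coprime (s p : ℕ) (hs : 2 ≤ s) (hp : 2 ≤ p)
    (hgcd : Nat.gcd p s = 1) (ρ : ℝ) (hρ : ρ = 1 / p)
    (ν : Measure ℝ) [IsProbabilityMeasure ν]
    (hself : ν = (s : ℝ≥0∞)⁻¹ • ∑ d ∈ Finset.range s,
      Measure.map (fun x : ℝ => (-1 : ℝ) ^ d * ρ * (x + (d : ℝ))) ν) :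
    (∀ Λ : Set ℝ, (∀ l1 ∈ Λ, ∀ l2 ∈ Λ, l1 ≠ l2 → measureFT ν (l1 - l2) = 0) →
      Λ.Finite ∧ Λ.ncard ≤ s) ∧ ¬ IsSpectral ν := by
  subst hρ
  have hν : IsSelfSimilar s (1 / p) ν := hself
  exact ⟨fun Λ => hν.finite_ncard_le_of_orthogonal hs hp hgcd, hν.not_isSpectral hs hp hgcd⟩
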